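/- For integers l₁ ≥ 1 and l₂ ≥ 0 with l₁ ≠ l₂ + 1, and for any θ, φ ∈ ℝ, the average over k ∈ [−π, π] (with measure dk/(2π)) of the vector (L_1(k))^{l₂} · L_H(k) · (L_1(k))^{l₁} applied to the Bloch vector (1/2)(1, cos φ sin θ, sin φ sin θ, cos θ) equals (1/2)(1, 0, 0, 0). -/

import Mathlib

open Real

noncomputable def L1 (k : ℝ) : Matrix (Fin 4) (Fin 4) ℝ :=
  !![1, 0, 0, 0;
     0, Real.cos (2 * k), -Real.sin (2 * k), 0;
     0, Real.sin (2 * k), Real.cos (2 * k), 0;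
     0, 0, 0, 1]

noncomputable def LH (k : ℝ) : Matrix (Fin 4) (Fin 4) ℝ :=
  !![1, 0, 0, 0;
     0, 0, Real.sin (2 * k), Real.cos (2 * k);
     0, 0, -Real.cos (2 * k), Real.sin (2 * k);
     0, 1, 0, 0]

noncomputable def blochIn (θ φ : ℝ) : Fin 4 → ℝ :=
  ![1 / 2, Real.cos φ * Real.sin θ / 2, Real.sin φ * Real.sin θ / 2, Real.cos θ / 2]

/-! `L1 k` rotates the Bloch vector by `2k` about the `z`-axis and `LH k = L1 k * LH 0`, so the
walk shifts the azimuth `φ` by `2 l₁ k`, applies the fixed map `LH 0`, then rotates by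
`2 (l₂ + 1) k`. The last three coordinates of the result are combinations of `cos` and `sin` of
`2 (l₂ + 1) k` and `2 l₁ k + φ` and of their products; after the product-to-sum formulas the
frequencies are `2 l₁`, `2 (l₂ + 1)` and `2 l₁ ± 2 (l₂ + 1)`, nonzero integers because `l₁ ≥ 1`
and `l₁ ≠ l₂ + 1`, so each coordinate averages to zero over `[-π, π]`. -/

open Matrix

noncomputable def rotZ (a : ℝ) : Matrix (Fin 4) (Fin 4) ℝ :=
  !![1, 0, 0, 0;
     0, cos a, -sin a, 0;
     0, sin a, cos a, 0;
     0, 0, 0, 1]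

theorem rotZ_zero : rotZ 0 = 1 := by
  ext i j
  fin_cases i <;> fin_cases j <;> simp [rotZ]

theorem rotZ_add (a b : ℝ) : rotZ (a + b) = rotZ a * rotZ b := by
  ext i j
  fin_cases i <;> fin_cases j <;>
    simp [rotZ, Matrix.mul_apply, Fin.sum_univ_four, cos_add, sin_add] <;> ring

theorem L1_eq_rotZ (k : ℝ) : L1 k = rotZ (2 * k) := rfl

theorem L1_pow (k : ℝ) (n : ℕ) : L1 k ^ n = rotZ (2 * n * k) := by
  induction n with
  | zero => simp [rotZ_zero]
  | succ n ih => rw [pow_succ, ih, L1_eq_rotZ, ← rotZ_add]; push_cast; ring_nf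

theorem LH_eq_L1_mul_LH_zero (k : ℝ) : LH k = L1 k * LH 0 := by
  ext i j
  fin_cases i <;> fin_cases j <;> simp [L1, LH, Matrix.mul_apply, Fin.sum_univ_four]

theorem rotZ_mulVec_blochIn (a θ φ : ℝ) : rotZ a *ᵥ blochIn θ φ = blochIn θ (a + φ) := by
  ext i
  fin_cases i <;>
    simp [rotZ, blochIn, mulVec, dotProduct, Fin.sum_univ_four, cos_add, sin_add] <;> ring

theorem rotZ_mul_LH_zero_mulVec_blochIn (a θ φ : ℝ) :
    (rotZ a * LH 0) *ᵥ blochIn θ φ =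
      ![1 / 2, cos θ / 2 * cos a + sin θ / 2 * (sin φ * sin a),
        cos θ / 2 * sin a + -sin θ / 2 * (sin φ * cos a), sin θ / 2 * cos φ] := by
  ext i
  fin_cases i <;>
    simp [rotZ, LH, blochIn, mulVec, dotProduct, Matrix.mul_apply, Fin.sum_univ_four] <;> ring

theorem L1_pow_mul_LH_mul_L1_pow_mulVec_blochIn (l₁ l₂ : ℕ) (k θ φ : ℝ) :
    (L1 k ^ l₂ * LH k * L1 k ^ l₁) *ᵥ blochIn θ φ =
      (rotZ (2 * (l₂ + 1) * k) * LH 0) *ᵥ blochIn θ (2 * l₁ * k + φ) := by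
  rw [LH_eq_L1_mul_LH_zero, ← mul_assoc, ← pow_succ, L1_pow, L1_pow, ← mulVec_mulVec,
    rotZ_mulVec_blochIn]
  push_cast
  rfl

theorem integral_cos_int_mul_add {m : ℤ} (hm : m ≠ 0) (b : ℝ) :
    ∫ x in (-π)..π, cos (m * x + b) = 0 := by
  rw [intervalIntegral.integral_comp_mul_add cos (Int.cast_ne_zero.mpr hm), integral_cos]
  simp [sin_add, mul_neg, sin_int_mul_pi]

theorem integral_sin_int_mul_add {m : ℤ} (hm : m ≠ 0) (b : ℝ) :
    ∫ x in (-π)..π, sin (m * x + b) = 0 := by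
  rw [intervalIntegral.integral_comp_mul_add sin (Int.cast_ne_zero.mpr hm), integral_sin]
  simp [cos_add, mul_neg, sin_int_mul_pi]

theorem integral_mul_add_mul_eq_zero {f g : ℝ → ℝ} {a b : ℝ} (hf : Continuous f)
    (hg : Continuous g) (hf₀ : ∫ x in a..b, f x = 0) (hg₀ : ∫ x in a..b, g x = 0) (c d : ℝ) :
    ∫ x in a..b, (c * f x + d * g x) = 0 := by
  rw [intervalIntegral.integral_add ((hf.intervalIntegrable a b).const_mul c)
      ((hg.intervalIntegrable a b).const_mul d),
    intervalIntegral.integral_const_mul, intervalIntegral.integral_const_mul, hf₀, hg₀]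
  ring

theorem integral_sin_mul_sin_int {m n : ℤ} (h : m ≠ n) (h' : m + n ≠ 0) (b c : ℝ) :
    ∫ x in (-π)..π, sin (m * x + b) * sin (n * x + c) = 0 := by
  have h_prod_to_sum : ∀ x : ℝ, sin (m * x + b) * sin (n * x + c) =
      1 / 2 * cos ((m - n : ℤ) * x + (b - c)) + -1 / 2 * cos ((m + n : ℤ) * x + (b + c)) := by
    intro x
    have h_sub : ((m - n : ℤ) : ℝ) * x + (b - c) = (m * x + b) - (n * x + c) := by
      push_cast; ring
    have h_add : ((m + n : ℤ) : ℝ) * x + (b + c) = (m * x + b) + (n * x + c) := by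
      push_cast; ring
    rw [h_sub, h_add, cos_sub (m * x + b), cos_add (m * x + b)]
    ring
  simp_rw [h_prod_to_sum]
  exact integral_mul_add_mul_eq_zero (by fun_prop) (by fun_prop)
    (integral_cos_int_mul_add (sub_ne_zero.mpr h) _) (integral_cos_int_mul_add h' _) _ _

theorem integral_sin_mul_cos_int {m n : ℤ} (h : m ≠ n) (h' : m + n ≠ 0) (b c : ℝ) :
    ∫ x in (-π)..π, sin (m * x + b) * cos (n * x + c) = 0 := by
  have h_sin := integral_sin_mul_sin_int h h' b (c + π / 2)
  simp_rw [← add_assoc, sin_add_pi_div_two] at h_sin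
  exact h_sin

theorem oneHadamard_maximalEntanglement
    (l₁ l₂ : ℕ) (h₁ : 1 ≤ l₁) (h : l₁ ≠ l₂ + 1) (θ φ : ℝ) (i : Fin 4) :
    (1 / (2 * π)) * ∫ k in (-π)..π,
        (((L1 k) ^ l₂ * LH k * (L1 k) ^ l₁).mulVec (blochIn θ φ)) i
      = (![1 / 2, 0, 0, 0] : Fin 4 → ℝ) i := by
  have hm : (2 * l₁ : ℤ) ≠ 0 := by omega
  have hn : (2 * (l₂ + 1) : ℤ) ≠ 0 := by omega
  have hmn : (2 * l₁ : ℤ) ≠ 2 * (l₂ + 1) := by omega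
  have hmn' : (2 * l₁ : ℤ) + 2 * (l₂ + 1) ≠ 0 := by omega
  simp only [L1_pow_mul_LH_mul_L1_pow_mulVec_blochIn, rotZ_mul_LH_zero_mulVec_blochIn]
  fin_cases i
  · simp
    field_simp
    norm_num
  · simpa using integral_mul_add_mul_eq_zero (by fun_prop) (by fun_prop)
      (integral_cos_int_mul_add hn 0) (integral_sin_mul_sin_int hmn hmn' φ 0)
      (cos θ / 2) (sin θ / 2)
  · simpa using integral_mul_add_mul_eq_zero (by fun_prop) (by fun_prop)
      (integral_sin_int_mul_add hn 0) (integral_sin_mul_cos_int hmn hmn' φ 0)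
      (cos θ / 2) (-sin θ / 2)
  · have h_cos : ∫ k in (-π)..π, cos (2 * l₁ * k + φ) = 0 := by
      exact_mod_cast integral_cos_int_mul_add hm φ
    simp [h_cos]
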